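/- There exist binary random variables X, U with X not independent of U (hence I(X;U) > 0) but with GL(X → U) = 0; specifically, taking X|{U=u_i} ~ Bernoulli(i/(i+3)) for i = 1,2 and U uniform on {u_1, u_2}, one has I(X;U) > 0 and GL(X → U) = 0. -/

import Mathlib

noncomputable def HG {n : ℕ} (p : Fin n → ℝ) : ℝ :=
  Finset.univ.inf' Finset.univ_nonempty
    (fun r : Equiv.Perm (Fin n) => ∑ i, (((r i : ℕ) : ℝ) + 1) * p i)

/-- `X | {U = u_i} ~ Bernoulli(i/(i+3))` for `i = 1, 2`:
`p_{X|U=u₁} = (3/4, 1/4)`, `p_{X|U=u₂} = (3/5, 2/5)`. -/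
noncomputable def pXgU : Fin 2 → Fin 2 → ℝ := ![![3 / 4, 1 / 4], ![3 / 5, 2 / 5]]

/-- Marginal of `X`, with `U` uniform on two values. -/
noncomputable def pX : Fin 2 → ℝ := fun x => ∑ u : Fin 2, (1 / 2) * pXgU u x

/-!
Mutual information is the Kullback–Leibler divergence between the joint law and the product of the
marginals, so it is positive as soon as `X` and `U` are dependent (Gibbs' inequality, via
`q · klFun (p / q) = p log (p / q) + q - p`).

Guessing entropy is a minimum of linear functionals, hence concave, and for a distribution listed
in decreasing order the identity permutation attains the minimum (rearrangement inequality).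
Both conditional laws `(3/4, 1/4)` and `(3/5, 2/5)` are decreasing, so `H_G` is linear on the
segment they span and the concavity gap `H_G(X) - H_G(X|U)` vanishes.
-/

open Real InformationTheory

section Gibbs

variable {ι : Type*} [Fintype ι]

theorem sum_mul_log_div_eq_sum_mul_klFun {p q : ι → ℝ} (hq : ∀ i, q i ≠ 0)
    (hsum : ∑ i, p i = ∑ i, q i) :
    ∑ i, p i * log (p i / q i) = ∑ i, q i * klFun (p i / q i) := by
  have hterm : ∀ i, q i * klFun (p i / q i) = p i * log (p i / q i) + (q i - p i) := by
    intro i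
    rw [klFun_apply]
    field_simp [hq i]
    ring
  rw [Finset.sum_congr rfl fun i _ => hterm i, Finset.sum_add_distrib, Finset.sum_sub_distrib,
    hsum, sub_self, add_zero]

theorem sum_mul_log_div_pos {p q : ι → ℝ} (hp : ∀ i, 0 < p i) (hq : ∀ i, 0 < q i)
    (hsum : ∑ i, p i = ∑ i, q i) (hne : p ≠ q) :
    0 < ∑ i, p i * log (p i / q i) := by
  rw [sum_mul_log_div_eq_sum_mul_klFun (fun i => (hq i).ne') hsum]
  obtain ⟨j, hj⟩ := Function.ne_iff.mp hne
  have hratio : ∀ i, 0 ≤ p i / q i := fun i => (div_pos (hp i) (hq i)).le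
  refine Finset.sum_pos' (fun i _ => mul_nonneg (hq i).le (klFun_nonneg (hratio i)))
    ⟨j, Finset.mem_univ j, mul_pos (hq j) ?_⟩
  refine (klFun_nonneg (hratio j)).lt_of_ne' fun h => hj ?_
  rwa [klFun_eq_zero_iff (hratio j), div_eq_one_iff_eq (hq j).ne'] at h

end Gibbs

section GuessingEntropy

theorem HG_eq_of_antitone {n : ℕ} {p : Fin n → ℝ} (hp : Antitone p) :
    HG p = ∑ i : Fin n, (((i : ℕ) : ℝ) + 1) * p i := by
  have hanti : Antivary (fun i : Fin n => ((i : ℕ) : ℝ) + 1) p :=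
    Monotone.antivary (fun i j hij => by simpa using hij) hp
  refine le_antisymm (Finset.inf'_le_of_le _ (Finset.mem_univ (Equiv.refl _)) le_rfl) ?_
  exact Finset.le_inf' _ _ fun σ _ => hanti.sum_smul_le_sum_comp_perm_smul

theorem HG_sum_mul_of_antitone {ι : Type*} [Fintype ι] {n : ℕ} {w : ι → ℝ} (hw : ∀ u, 0 ≤ w u)
    {q : ι → Fin n → ℝ} (hq : ∀ u, Antitone (q u)) :
    HG (fun x => ∑ u, w u * q u x) = ∑ u, w u * HG (q u) := by
  have hmix : Antitone fun x => ∑ u, w u * q u x := fun x y hxy =>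
    Finset.sum_le_sum fun u _ => mul_le_mul_of_nonneg_left (hq u hxy) (hw u)
  simp only [HG_eq_of_antitone hmix, HG_eq_of_antitone (hq _), Finset.mul_sum]
  rw [Finset.sum_comm]
  exact Finset.sum_congr rfl fun u _ => Finset.sum_congr rfl fun i _ => by ring

end GuessingEntropy

/-- `I(X;U) > 0` (X and U are dependent) yet `GL(X → U) = 0`. -/
theorem mutual_info_pos_guessing_leakage_zero :
    0 < ∑ u : Fin 2, ∑ x : Fin 2,
        (1 / 2) * pXgU u x *
          Real.log ((1 / 2 * pXgU u x) / (1 / 2 * pX x)) ∧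
    HG pX - ∑ u : Fin 2, (1 / 2) * HG (pXgU u) = 0 := by
  have hpos : ∀ u x, 0 < pXgU u x := by
    intro u x; fin_cases u <;> fin_cases x <;> norm_num [pXgU]
  have hanti : ∀ u, Antitone (pXgU u) := by
    intro u; rw [Fin.antitone_iff_succ_le]; fin_cases u <;> norm_num [pXgU]
  constructor
  · rw [← Fintype.sum_prod_type' (f := fun u x =>
      1 / 2 * pXgU u x * Real.log ((1 / 2 * pXgU u x) / (1 / 2 * pX x)))]
    have hpX : ∀ x, 0 < pX x := fun x =>
      Finset.sum_pos (fun u _ => mul_pos (by norm_num) (hpos u x)) Finset.univ_nonempty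
    refine sum_mul_log_div_pos (fun z => by have := hpos z.1 z.2; positivity)
      (fun z => by have := hpX z.2; positivity) ?_ fun h => ?_
    · norm_num [Fintype.sum_prod_type, Fin.sum_univ_two, pX, pXgU]
    · have := congrFun h (0, 0)
      norm_num [pX, pXgU, Fin.sum_univ_two] at this
  · rw [show pX = fun x => ∑ u, 1 / 2 * pXgU u x from rfl,
      HG_sum_mul_of_antitone (fun _ => by norm_num) hanti, sub_self]
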